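/- arXiv:math/9703215 — 2 statements merged into one kernel-verified Lean document; each statement's English description precedes it below -/
import Mathlib

section
/- Fix q with 0 < q < 1. Let ν ∈ ℂ with Re(ν) > −1, let z > 0 and let a, b ∈ ℂ∖{0}. Then (a² − b²) · ∫₀^z x J_ν(aqx;q²) J_ν(bqx;q²) d_q x = (1−q) q^{ν−1} z ( a J_{ν+1}(aqz;q²) J_ν(bz;q²) − b J_{ν+1}(bqz;q²) J_ν(az;q²) ). -/
open scoped BigOperators

noncomputable section

/-- Finite q-shifted factorial `(a;q)_k` in `ℂ`. -/
def qPochC (a q : ℂ) (k : ℕ) : ℂ := ∏ j ∈ Finset.range k, (1 - a * q ^ j)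

/-- Infinite q-shifted factorial `(a;q)_∞` in `ℂ`. -/
def qPochInfC (a q : ℂ) : ℂ := ∏' j : ℕ, (1 - a * q ^ j)

/-- Hahn–Exton q-Bessel function of complex order `ν` (principal-branch powers). -/
def JHE (ν : ℂ) (q : ℝ) (x : ℂ) : ℂ :=
  x ^ ν * (qPochInfC ((q : ℂ) ^ (ν + 1)) (q : ℂ) / qPochInfC (q : ℂ) (q : ℂ)) *
    ∑' k : ℕ, ((-1 : ℂ) ^ k * (q : ℂ) ^ (k * (k + 1) / 2) * x ^ (2 * k)) /
      (qPochC (q : ℂ) (q : ℂ) k * qPochC ((q : ℂ) ^ (ν + 1)) (q : ℂ) k)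

/-- Jackson q-integral `∫₀^z f(x) d_q x`. -/
def qInt (q z : ℝ) (f : ℝ → ℂ) : ℂ :=
  (((1 - q) * z : ℝ) : ℂ) * ∑' k : ℕ, ((q ^ k : ℝ) : ℂ) * f (z * q ^ k)

namespace Prop31

open Complex Filter

lemma qPochC_succ (a q : ℂ) (k : ℕ) :
    qPochC a q (k+1) = qPochC a q k * (1 - a * q ^ k) :=
  Finset.prod_range_succ _ _

lemma qPochC_succ' (a q : ℂ) (k : ℕ) :
    qPochC a q (k+1) = (1 - a) * qPochC (a*q) q k := by
  rw [qPochC, Finset.prod_range_succ', qPochC, pow_zero, mul_one,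
    mul_comm _ (1 - a)]
  congr 1
  exact Finset.prod_congr rfl fun j _ => by ring

lemma one_sub_ne {x : ℂ} (h : ‖x‖ < 1) : (1:ℂ) - x ≠ 0 := by
  intro hx
  rw [sub_eq_zero] at hx
  rw [← hx] at h
  simp at h

lemma qPochC_norm_ge {a q : ℂ} (hq : ‖q‖ ≤ 1) (ha : ‖a‖ < 1) (k : ℕ) :
    (1 - ‖a‖) ^ k ≤ ‖qPochC a q k‖ := by
  rw [qPochC, norm_prod]
  calc (1 - ‖a‖) ^ k = ∏ _j ∈ Finset.range k, (1 - ‖a‖) := by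
        rw [Finset.prod_const, Finset.card_range]
    _ ≤ ∏ j ∈ Finset.range k, ‖1 - a * q ^ j‖ := by
        refine Finset.prod_le_prod (fun j _ => by linarith) (fun j _ => ?_)
        have h1 : ‖a * q ^ j‖ ≤ ‖a‖ := by
          rw [norm_mul, norm_pow]
          calc ‖a‖ * ‖q‖ ^ j ≤ ‖a‖ * 1 := by
                refine mul_le_mul_of_nonneg_left ?_ (norm_nonneg a)
                exact pow_le_one₀ (norm_nonneg q) hq
            _ = ‖a‖ := mul_one _
        have h2 := norm_sub_norm_le (1:ℂ) (a * q ^ j)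
        simp only [norm_one] at h2
        linarith

lemma qPochC_ne_zero {a q : ℂ} (hq : ‖q‖ ≤ 1) (ha : ‖a‖ < 1) (k : ℕ) :
    qPochC a q k ≠ 0 := by
  have h := qPochC_norm_ge hq ha k
  have : (0:ℝ) < (1 - ‖a‖) ^ k := pow_pos (by linarith) k
  intro h0
  rw [h0] at h
  simp only [norm_zero] at h
  exact absurd h (not_le.mpr this)

def dcoef (p : ℝ) (A : ℂ) (k : ℕ) : ℂ :=
  ((-1:ℂ)^k * (p:ℂ)^(k*(k+1)/2)) / (qPochC (p:ℂ) (p:ℂ) k * qPochC A (p:ℂ) k)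

def Gf (p : ℝ) (A : ℂ) (w : ℂ) : ℂ := ∑' k : ℕ, dcoef p A k * w ^ k

section core
variable {p : ℝ} {A : ℂ} (hp0 : 0 < p) (hp1 : p < 1) (hA : ‖A‖ < 1)
include hp0 hp1

lemma norm_pC : ‖(p:ℂ)‖ = p := by
  rw [Complex.norm_real, Real.norm_eq_abs, abs_of_pos hp0]

lemma norm_pC_lt : ‖(p:ℂ)‖ < 1 := by rw [norm_pC hp0 hp1]; exact hp1

lemma norm_pC_le : ‖(p:ℂ)‖ ≤ 1 := (norm_pC_lt hp0 hp1).le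

include hA in
lemma normApow_lt (k : ℕ) : ‖A * (p:ℂ)^k‖ < 1 := by
  rw [norm_mul, norm_pow, norm_pC hp0 hp1]
  calc ‖A‖ * p ^ k ≤ ‖A‖ * 1 := by
        refine mul_le_mul_of_nonneg_left ?_ (norm_nonneg A)
        exact pow_le_one₀ hp0.le hp1.le
    _ = ‖A‖ := mul_one _
    _ < 1 := hA

lemma normppow_lt (k : ℕ) : ‖(p:ℂ) * (p:ℂ)^k‖ < 1 :=
  normApow_lt hp0 hp1 (norm_pC_lt hp0 hp1) k

include hA in
lemma normAp_lt : ‖A * (p:ℂ)‖ < 1 := by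
  simpa using normApow_lt hp0 hp1 hA 1

omit hp0 hp1 in
lemma Texp (k : ℕ) : (k+1)*(k+1+1)/2 = k*(k+1)/2 + (k+1) := by
  have h : (k+1)*(k+1+1) = k*(k+1) + 2*(k+1) := by ring
  rw [h, Nat.add_mul_div_left _ _ (by norm_num : (0:ℕ) < 2)]

include hA in
lemma c0 (k : ℕ) :
    dcoef p A (k+1) * ((1 - (p:ℂ)*(p:ℂ)^k) * (1 - A*(p:ℂ)^k))
      = -((p:ℂ)^(k+1)) * dcoef p A k := by
  have h1 : qPochC (p:ℂ) (p:ℂ) k ≠ 0 :=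
    qPochC_ne_zero (norm_pC_le hp0 hp1) (norm_pC_lt hp0 hp1) k
  have h2 : qPochC A (p:ℂ) k ≠ 0 := qPochC_ne_zero (norm_pC_le hp0 hp1) hA k
  have h3 : (1 - (p:ℂ)*(p:ℂ)^k) ≠ 0 := one_sub_ne (normppow_lt hp0 hp1 k)
  have h4 : (1 - A*(p:ℂ)^k) ≠ 0 := one_sub_ne (normApow_lt hp0 hp1 hA k)
  rw [dcoef, dcoef, qPochC_succ, qPochC_succ, Texp, pow_add]
  field_simp
  rw [mul_comm ((p:ℂ)^k) A, mul_div_assoc, div_self h4]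
  ring

include hA in
lemma c1 (k : ℕ) :
    dcoef p A (k+1) * ((1 - (p:ℂ)*(p:ℂ)^k) * (1 - A))
      = -((p:ℂ)^(k+1)) * dcoef p (A*(p:ℂ)) k := by
  have h1 : qPochC (p:ℂ) (p:ℂ) k ≠ 0 :=
    qPochC_ne_zero (norm_pC_le hp0 hp1) (norm_pC_lt hp0 hp1) k
  have h2 : qPochC (A*(p:ℂ)) (p:ℂ) k ≠ 0 :=
    qPochC_ne_zero (norm_pC_le hp0 hp1) (normAp_lt hp0 hp1 hA) k
  have h3 : (1 - (p:ℂ)*(p:ℂ)^k) ≠ 0 := one_sub_ne (normppow_lt hp0 hp1 k)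
  have h4 : (1 - A) ≠ 0 := one_sub_ne hA
  rw [dcoef, dcoef, qPochC_succ (p:ℂ), qPochC_succ' A, Texp, pow_add]
  field_simp
  ring

include hA in
lemma c2 (k : ℕ) :
    dcoef p (A*(p:ℂ)) k * (1 - A*(p:ℂ)^k) = (1 - A) * dcoef p A k := by
  have h1 : qPochC (p:ℂ) (p:ℂ) k ≠ 0 :=
    qPochC_ne_zero (norm_pC_le hp0 hp1) (norm_pC_lt hp0 hp1) k
  have h2 : qPochC (A*(p:ℂ)) (p:ℂ) k ≠ 0 :=
    qPochC_ne_zero (norm_pC_le hp0 hp1) (normAp_lt hp0 hp1 hA) k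
  have h2' : qPochC A (p:ℂ) k ≠ 0 := qPochC_ne_zero (norm_pC_le hp0 hp1) hA k
  have key : qPochC A (p:ℂ) k * (1 - A*(p:ℂ)^k) = (1 - A) * qPochC (A*(p:ℂ)) (p:ℂ) k := by
    rw [← qPochC_succ, qPochC_succ']
  rw [dcoef, dcoef]
  field_simp
  linear_combination ((p:ℂ)^(k*(k+1)/2)) * key

end core

section core2
variable {p : ℝ} {A : ℂ} (hp0 : 0 < p) (hp1 : p < 1) (hA : ‖A‖ < 1)
include hp0 hp1 hA

lemma dcoef_norm_bound (k : ℕ) :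
    ‖dcoef p A (k+1)‖ ≤ p^(k+1) * ‖dcoef p A k‖ / ((1-p) * (1-‖A‖)) := by
  have h := congrArg norm (c0 hp0 hp1 hA k)
  simp only [norm_mul, norm_neg, norm_pow, norm_pC hp0 hp1] at h
  have hb1 : (1:ℝ) - p ≤ ‖1 - (p:ℂ)*(p:ℂ)^k‖ := by
    have h2 := norm_sub_norm_le (1:ℂ) ((p:ℂ)*(p:ℂ)^k)
    simp only [norm_one] at h2
    have h3 : ‖(p:ℂ)*(p:ℂ)^k‖ ≤ p := by
      rw [norm_mul, norm_pow, norm_pC hp0 hp1]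
      calc p * p^k ≤ p * 1 := by
            refine mul_le_mul_of_nonneg_left ?_ hp0.le
            exact pow_le_one₀ hp0.le hp1.le
        _ = p := mul_one _
    linarith
  have hb2 : (1:ℝ) - ‖A‖ ≤ ‖1 - A*(p:ℂ)^k‖ := by
    have h2 := norm_sub_norm_le (1:ℂ) (A*(p:ℂ)^k)
    simp only [norm_one] at h2
    have h3 : ‖A*(p:ℂ)^k‖ ≤ ‖A‖ := by
      rw [norm_mul, norm_pow, norm_pC hp0 hp1]
      calc ‖A‖ * p^k ≤ ‖A‖ * 1 := by
            refine mul_le_mul_of_nonneg_left ?_ (norm_nonneg A)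
            exact pow_le_one₀ hp0.le hp1.le
        _ = ‖A‖ := mul_one _
    linarith
  have hpos1 : (0:ℝ) < 1 - p := by linarith
  have hpos2 : (0:ℝ) < 1 - ‖A‖ := by linarith
  rw [le_div_iff₀ (by positivity)]
  calc ‖dcoef p A (k+1)‖ * ((1-p) * (1-‖A‖))
      ≤ ‖dcoef p A (k+1)‖ * (‖1 - (p:ℂ)*(p:ℂ)^k‖ * ‖1 - A*(p:ℂ)^k‖) := by
        refine mul_le_mul_of_nonneg_left ?_ (norm_nonneg _)
        exact mul_le_mul hb1 hb2 hpos2.le (norm_nonneg _)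
    _ = p^(k+1) * ‖dcoef p A k‖ := h

lemma summable_dcoef (v : ℂ) : Summable (fun k => dcoef p A k * v ^ k) := by
  have hpos1 : (0:ℝ) < 1 - p := by linarith
  have hpos2 : (0:ℝ) < 1 - ‖A‖ := by linarith
  refine summable_of_ratio_norm_eventually_le (r := 1/2) (by norm_num) ?_
  have htend : Filter.Tendsto (fun k : ℕ => p^(k+1) * ‖v‖ / ((1-p) * (1-‖A‖)))
      Filter.atTop (nhds 0) := by
    have h0 : Filter.Tendsto (fun k : ℕ => p^k) Filter.atTop (nhds 0) :=
      tendsto_pow_atTop_nhds_zero_of_lt_one hp0.le hp1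
    have h1 : Filter.Tendsto (fun k : ℕ => p^(k+1)) Filter.atTop (nhds 0) :=
      h0.comp (Filter.tendsto_add_atTop_nat 1)
    have := (h1.mul_const ‖v‖).div_const ((1-p) * (1-‖A‖))
    simpa using this
  filter_upwards [htend.eventually_le_const (by norm_num : (0:ℝ) < 1/2)] with k hk
  have hd := dcoef_norm_bound hp0 hp1 hA k
  calc ‖dcoef p A (k+1) * v^(k+1)‖ = ‖dcoef p A (k+1)‖ * (‖v‖^k * ‖v‖) := by
        rw [norm_mul, norm_pow, pow_succ]
    _ ≤ (p^(k+1) * ‖dcoef p A k‖ / ((1-p) * (1-‖A‖))) * (‖v‖^k * ‖v‖) := by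
        refine mul_le_mul_of_nonneg_right hd (by positivity)
    _ = (p^(k+1) * ‖v‖ / ((1-p) * (1-‖A‖))) * (‖dcoef p A k‖ * ‖v‖^k) := by ring
    _ ≤ (1/2) * (‖dcoef p A k‖ * ‖v‖^k) := by
        refine mul_le_mul_of_nonneg_right hk (by positivity)
    _ = 1/2 * ‖dcoef p A k * v^k‖ := by rw [norm_mul, norm_pow]

lemma summable_dcoef_norm {R : ℝ} (hR : 0 ≤ R) :
    Summable (fun k => ‖dcoef p A k‖ * R ^ k) := by
  refine (summable_norm_iff.mpr (summable_dcoef hp0 hp1 hA (R:ℂ))).congr fun k => ?_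
  rw [norm_mul, norm_pow, Complex.norm_real, Real.norm_eq_abs, _root_.abs_of_nonneg hR]

lemma Gf_norm_le {R : ℝ} (hR : 0 ≤ R) {v : ℂ} (hv : ‖v‖ ≤ R) :
    ‖Gf p A v‖ ≤ ∑' k, ‖dcoef p A k‖ * R ^ k := by
  refine tsum_of_norm_bounded (summable_dcoef_norm hp0 hp1 hA hR).hasSum fun k => ?_
  rw [norm_mul, norm_pow]
  refine mul_le_mul_of_nonneg_left ?_ (norm_nonneg _)
  exact pow_le_pow_left₀ (norm_nonneg v) hv k

lemma relII (w : ℂ) :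
    Gf p (A*(p:ℂ)) w - A * Gf p (A*(p:ℂ)) ((p:ℂ)*w) = (1-A) * Gf p A w := by
  have hA' : ‖A*(p:ℂ)‖ < 1 := normAp_lt hp0 hp1 hA
  have h1 : Summable (fun k => dcoef p (A*(p:ℂ)) k * w^k) := summable_dcoef hp0 hp1 hA' w
  have h2 : Summable (fun k => A * (dcoef p (A*(p:ℂ)) k * ((p:ℂ)*w)^k)) :=
    (summable_dcoef hp0 hp1 hA' ((p:ℂ)*w)).mul_left A
  rw [Gf, Gf, Gf, ← tsum_mul_left, ← tsum_mul_left, ← Summable.tsum_sub h1 h2]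
  refine tsum_congr fun k => ?_
  have hc := c2 hp0 hp1 hA k
  linear_combination (w^k) * hc

lemma relI (w : ℂ) :
    (1-A) * (Gf p A w - Gf p A ((p:ℂ)*w))
      = -((p:ℂ)*w) * Gf p (A*(p:ℂ)) ((p:ℂ)*w) := by
  have hA' : ‖A*(p:ℂ)‖ < 1 := normAp_lt hp0 hp1 hA
  have h1 : Summable (fun k => dcoef p A k * w^k) := summable_dcoef hp0 hp1 hA w
  have h2 : Summable (fun k => dcoef p A k * ((p:ℂ)*w)^k) :=
    summable_dcoef hp0 hp1 hA ((p:ℂ)*w)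
  have hg : Summable (fun k => (1-A) * (dcoef p A k * w^k - dcoef p A k * ((p:ℂ)*w)^k)) :=
    (h1.sub h2).mul_left (1-A)
  rw [Gf, Gf, ← Summable.tsum_sub h1 h2, ← tsum_mul_left]
  rw [Summable.tsum_eq_zero_add hg]
  simp only [pow_zero, mul_one, sub_self, mul_zero, zero_add]
  rw [Gf, ← tsum_mul_left]
  refine tsum_congr fun k => ?_
  have hc := c1 hp0 hp1 hA k
  linear_combination (w^(k+1)) * hc

end core2

section core3
variable {p : ℝ} {A : ℂ} (hp0 : 0 < p) (hp1 : p < 1) (hA : ‖A‖ < 1)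
include hp0 hp1 hA

lemma step (a b w₀ : ℂ) :
    (1-A) * (a^2-b^2) * (Gf p A (a^2*((p:ℂ)*w₀)) * Gf p A (b^2*((p:ℂ)*w₀)))
      = (a^2 * Gf p (A*(p:ℂ)) (a^2*((p:ℂ)*w₀)) * Gf p A (b^2*w₀)
          - b^2 * Gf p (A*(p:ℂ)) (b^2*((p:ℂ)*w₀)) * Gf p A (a^2*w₀))
        - A * (a^2 * Gf p (A*(p:ℂ)) (a^2*((p:ℂ)*((p:ℂ)*w₀))) * Gf p A (b^2*((p:ℂ)*w₀))
          - b^2 * Gf p (A*(p:ℂ)) (b^2*((p:ℂ)*((p:ℂ)*w₀))) * Gf p A (a^2*((p:ℂ)*w₀))) := by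
  have h1A : (1:ℂ) - A ≠ 0 := one_sub_ne hA
  have h1 := relII hp0 hp1 hA (a^2*((p:ℂ)*w₀))
  rw [show (p:ℂ)*(a^2*((p:ℂ)*w₀)) = a^2*((p:ℂ)*((p:ℂ)*w₀)) by ring] at h1
  have h2 := relII hp0 hp1 hA (b^2*((p:ℂ)*w₀))
  rw [show (p:ℂ)*(b^2*((p:ℂ)*w₀)) = b^2*((p:ℂ)*((p:ℂ)*w₀)) by ring] at h2
  have h3 := relI hp0 hp1 hA (b^2*w₀)
  rw [show (p:ℂ)*(b^2*w₀) = b^2*((p:ℂ)*w₀) by ring] at h3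
  have h4 := relI hp0 hp1 hA (a^2*w₀)
  rw [show (p:ℂ)*(a^2*w₀) = a^2*((p:ℂ)*w₀) by ring] at h4
  apply mul_left_cancel₀ h1A
  linear_combination (-(a^2 * Gf p (A*(p:ℂ)) (a^2*((p:ℂ)*w₀)))) * h3
    + (b^2 * Gf p (A*(p:ℂ)) (b^2*((p:ℂ)*w₀))) * h4
    - ((1-A) * a^2 * Gf p A (b^2*((p:ℂ)*w₀))) * h1
    + ((1-A) * b^2 * Gf p A (a^2*((p:ℂ)*w₀))) * h2

set_option maxHeartbeats 6000000 in
lemma telescope (a b w : ℂ) :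
    ((1-A) * (a^2-b^2)) * ∑' k : ℕ,
        A^k * Gf p A (a^2*((p:ℂ)^(k+1)*w)) * Gf p A (b^2*((p:ℂ)^(k+1)*w))
      = a^2 * Gf p (A*(p:ℂ)) (a^2*((p:ℂ)*w)) * Gf p A (b^2*w)
        - b^2 * Gf p (A*(p:ℂ)) (b^2*((p:ℂ)*w)) * Gf p A (a^2*w) := by
  have hA' : ‖A*(p:ℂ)‖ < 1 := normAp_lt hp0 hp1 hA
  set u : ℕ → ℂ := fun k =>
    A^k * (a^2 * Gf p (A*(p:ℂ)) (a^2*((p:ℂ)^(k+1)*w)) * Gf p A (b^2*((p:ℂ)^k*w))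
      - b^2 * Gf p (A*(p:ℂ)) (b^2*((p:ℂ)^(k+1)*w)) * Gf p A (a^2*((p:ℂ)^k*w))) with hu
  -- pointwise step
  have hstep : ∀ k : ℕ,
      ((1-A) * (a^2-b^2)) * (A^k * Gf p A (a^2*((p:ℂ)^(k+1)*w)) * Gf p A (b^2*((p:ℂ)^(k+1)*w)))
        = u k - u (k+1) := by
    intro k
    have hs := step hp0 hp1 hA a b ((p:ℂ)^k*w)
    rw [show a^2*((p:ℂ)*((p:ℂ)^k*w)) = a^2*((p:ℂ)^(k+1)*w) by ring,
        show b^2*((p:ℂ)*((p:ℂ)^k*w)) = b^2*((p:ℂ)^(k+1)*w) by ring,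
        show a^2*((p:ℂ)*((p:ℂ)*((p:ℂ)^k*w))) = a^2*((p:ℂ)^(k+1+1)*w) by ring,
        show b^2*((p:ℂ)*((p:ℂ)*((p:ℂ)^k*w))) = b^2*((p:ℂ)^(k+1+1)*w) by ring] at hs
    simp only [hu]
    calc ((1-A) * (a^2-b^2)) * (A^k * Gf p A (a^2*((p:ℂ)^(k+1)*w)) * Gf p A (b^2*((p:ℂ)^(k+1)*w)))
        = A^k * ((1-A) * (a^2-b^2) * (Gf p A (a^2*((p:ℂ)^(k+1)*w)) * Gf p A (b^2*((p:ℂ)^(k+1)*w)))) := by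
          ring
      _ = _ := by rw [hs]; ring
  -- bounds
  set R : ℝ := ‖a^2*w‖ + ‖b^2*w‖ with hR
  have hR0 : 0 ≤ R := by positivity
  have hargbound : ∀ (c : ℂ) (j : ℕ), ‖c^2*w‖ ≤ R → ‖c^2*((p:ℂ)^j*w)‖ ≤ R := by
    intro c j hc
    calc ‖c^2*((p:ℂ)^j*w)‖ = ‖(p:ℂ)‖^j * ‖c^2*w‖ := by
          rw [← norm_pow, ← norm_mul]; ring_nf
      _ ≤ 1 * ‖c^2*w‖ := by
          refine mul_le_mul_of_nonneg_right ?_ (norm_nonneg _)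
          exact pow_le_one₀ (norm_nonneg _) (norm_pC_le hp0 hp1)
      _ ≤ R := by rw [one_mul]; exact hc
  have hba : ‖a^2*w‖ ≤ R := le_add_of_nonneg_right (norm_nonneg _)
  have hbb : ‖b^2*w‖ ≤ R := le_add_of_nonneg_left (norm_nonneg _)
  set MA : ℝ := ∑' k, ‖dcoef p A k‖ * R ^ k with hMA
  set MA' : ℝ := ∑' k, ‖dcoef p (A*(p:ℂ)) k‖ * R ^ k with hMA'
  have hMA0 : 0 ≤ MA := tsum_nonneg fun k => by positivity
  have hMA'0 : 0 ≤ MA' := tsum_nonneg fun k => by positivity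
  have hGa : ∀ (c : ℂ) (j : ℕ), ‖c^2*w‖ ≤ R → ‖Gf p A (c^2*((p:ℂ)^j*w))‖ ≤ MA :=
    fun c j hc => Gf_norm_le hp0 hp1 hA hR0 (hargbound c j hc)
  have hGa' : ∀ (c : ℂ) (j : ℕ), ‖c^2*w‖ ≤ R → ‖Gf p (A*(p:ℂ)) (c^2*((p:ℂ)^j*w))‖ ≤ MA' :=
    fun c j hc => Gf_norm_le hp0 hp1 hA' hR0 (hargbound c j hc)
  -- summability of the main series
  have hsummain : Summable (fun k : ℕ =>
      A^k * Gf p A (a^2*((p:ℂ)^(k+1)*w)) * Gf p A (b^2*((p:ℂ)^(k+1)*w))) := by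
    refine Summable.of_norm_bounded (g := fun k => (MA * MA) * ‖A‖^k)
      (((summable_geometric_of_lt_one (norm_nonneg A) hA)).mul_left _) fun k => ?_
    rw [norm_mul, norm_mul, norm_pow]
    calc ‖A‖^k * ‖Gf p A (a^2*((p:ℂ)^(k+1)*w))‖ * ‖Gf p A (b^2*((p:ℂ)^(k+1)*w))‖
        ≤ ‖A‖^k * MA * MA := by
          gcongr <;> [exact hGa a (k+1) hba; exact hGa b (k+1) hbb]
      _ = (MA * MA) * ‖A‖^k := by ring
  -- u tends to zero
  set C : ℝ := ‖a^2‖ * MA' * MA + ‖b^2‖ * MA' * MA with hC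
  have hu0 : Filter.Tendsto u Filter.atTop (nhds 0) := by
    have hgeo : Filter.Tendsto (fun k : ℕ => C * ‖A‖^k)
        Filter.atTop (nhds 0) := by
      have := tendsto_pow_atTop_nhds_zero_of_lt_one (norm_nonneg A) hA
      simpa using this.const_mul C
    refine squeeze_zero_norm (fun k => ?_) hgeo
    simp only [hu]
    rw [norm_mul, norm_pow]
    have hb1 : ‖a^2 * Gf p (A*(p:ℂ)) (a^2*((p:ℂ)^(k+1)*w)) * Gf p A (b^2*((p:ℂ)^k*w))‖
        ≤ ‖a^2‖ * MA' * MA := by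
      rw [norm_mul, norm_mul]
      gcongr <;> [exact hGa' a (k+1) hba; exact hGa b k hbb]
    have hb2 : ‖b^2 * Gf p (A*(p:ℂ)) (b^2*((p:ℂ)^(k+1)*w)) * Gf p A (a^2*((p:ℂ)^k*w))‖
        ≤ ‖b^2‖ * MA' * MA := by
      rw [norm_mul, norm_mul]
      gcongr <;> [exact hGa' b (k+1) hbb; exact hGa a k hba]
    calc ‖A‖^k * ‖a^2 * Gf p (A*(p:ℂ)) (a^2*((p:ℂ)^(k+1)*w)) * Gf p A (b^2*((p:ℂ)^k*w))
          - b^2 * Gf p (A*(p:ℂ)) (b^2*((p:ℂ)^(k+1)*w)) * Gf p A (a^2*((p:ℂ)^k*w))‖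
        ≤ ‖A‖^k * (‖a^2‖ * MA' * MA + ‖b^2‖ * MA' * MA) := by
          refine mul_le_mul_of_nonneg_left ?_ (by positivity)
          exact (norm_sub_le _ _).trans (add_le_add hb1 hb2)
      _ = C * ‖A‖^k := by rw [hC]; ring
  -- telescoping
  have hdiff : Summable (fun k => u k - u (k+1)) :=
    (hsummain.mul_left ((1-A) * (a^2-b^2))).congr hstep
  have hpartial : Filter.Tendsto (fun n => ∑ i ∈ Finset.range n, (u i - u (i+1)))
      Filter.atTop (nhds (u 0)) := by
    simp only [Finset.sum_range_sub']
    simpa using Filter.Tendsto.sub (tendsto_const_nhds (x := u 0)) hu0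
  have htsum : ∑' k, (u k - u (k+1)) = u 0 :=
    tendsto_nhds_unique hdiff.hasSum.tendsto_sum_nat hpartial
  calc ((1-A) * (a^2-b^2)) * ∑' k : ℕ,
        A^k * Gf p A (a^2*((p:ℂ)^(k+1)*w)) * Gf p A (b^2*((p:ℂ)^(k+1)*w))
      = ∑' k : ℕ, ((1-A) * (a^2-b^2)) *
          (A^k * Gf p A (a^2*((p:ℂ)^(k+1)*w)) * Gf p A (b^2*((p:ℂ)^(k+1)*w))) := by
        rw [tsum_mul_left]
    _ = ∑' k, (u k - u (k+1)) := tsum_congr hstep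
    _ = u 0 := htsum
    _ = _ := by
        simp only [hu, pow_zero, one_mul, zero_add, pow_one]
end core3

section infprod
variable {p : ℝ} (hp0 : 0 < p) (hp1 : p < 1)
include hp0 hp1

lemma multipliable_shift {B : ℂ} (hB : ‖B‖ < 1) :
    Multipliable (fun n : ℕ => 1 - B * (p:ℂ)^(n+1)) := by
  have hfn : ∀ (_ : Unit) (n : ℕ), 1 - B * (p:ℂ)^(n+1) ≠ 0 :=
    fun _ n => one_sub_ne (by simpa using normApow_lt hp0 hp1 hB (n+1))
  refine Complex.multipliable_of_summable_log ?_
  -- Summable fun n => Complex.log (1 - B * p^(n+1))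
  have hgeo : Summable (fun n : ℕ => (3/2 : ℝ) * (‖B‖ * p^(n+1))) := by
    have : Summable (fun n : ℕ => p ^ n) := summable_geometric_of_lt_one hp0.le hp1
    exact (((this.mul_left p).mul_left ‖B‖).mul_left (3/2)).congr fun n => by ring
  refine Summable.of_norm_bounded_eventually_nat hgeo ?_
  have htend : Filter.Tendsto (fun n : ℕ => ‖B‖ * p^(n+1)) Filter.atTop (nhds 0) := by
    have h0 := tendsto_pow_atTop_nhds_zero_of_lt_one hp0.le hp1
    simpa using (h0.comp (Filter.tendsto_add_atTop_nat 1)).const_mul ‖B‖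
  filter_upwards [htend.eventually_le_const (by norm_num : (0:ℝ) < 1/2)] with n hn
  have hB1 : ‖-(B * (p:ℂ)^(n+1))‖ ≤ 1/2 := by
    rw [norm_neg, norm_mul, norm_pow, norm_pC hp0 hp1]
    exact hn
  have := Complex.norm_log_one_add_half_le_self hB1
  rw [show (1:ℂ) + -(B * (p:ℂ)^(n+1)) = 1 - B * (p:ℂ)^(n+1) by ring] at this
  refine this.trans ?_
  rw [norm_neg, norm_mul, norm_pow, norm_pC hp0 hp1]

set_option maxHeartbeats 1000000 in
lemma qPochInfC_shift {B : ℂ} (hB : ‖B‖ < 1) :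
    qPochInfC B (p:ℂ) = (1 - B) * qPochInfC (B*(p:ℂ)) (p:ℂ) := by
  have hm : Multipliable (fun n : ℕ => (fun j : ℕ => 1 - B * (p:ℂ)^j) (n+1)) :=
    multipliable_shift hp0 hp1 hB
  rw [qPochInfC, tprod_eq_zero_mul' hm]
  rw [pow_zero, mul_one, qPochInfC]
  congr 1
  refine tprod_congr fun n => ?_
  ring

end infprod

section cpowhelp

lemma ofReal_mul_cpow {t : ℝ} (ht : 0 < t) {y : ℂ} (hy : y ≠ 0) (s : ℂ) :
    ((t:ℂ) * y) ^ s = (t:ℂ)^s * y^s := by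
  have ht' : (t:ℂ) ≠ 0 := by
    simpa using ht.ne'
  have hty : (t:ℂ)*y ≠ 0 := mul_ne_zero ht' hy
  rw [Complex.cpow_def_of_ne_zero hty, Complex.cpow_def_of_ne_zero ht',
    Complex.cpow_def_of_ne_zero hy, ← Complex.exp_add, ← add_mul]
  congr 1
  rw [Complex.log, Complex.log, Complex.log]
  have harg : ((t:ℂ)*y).arg = y.arg := Complex.arg_real_mul y ht
  have habs : ‖(t:ℂ)*y‖ = t * ‖y‖ := by
    rw [norm_mul, Complex.norm_real, Real.norm_eq_abs, abs_of_pos ht]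
  have habsy : ‖y‖ ≠ 0 := by
    simpa using hy
  rw [harg, habs, Real.log_mul ht.ne' habsy, Complex.norm_real, Real.norm_eq_abs, abs_of_pos ht,
    Complex.arg_ofReal_of_nonneg ht.le]
  push_cast
  ring

lemma ofReal_pow_cpow {t : ℝ} (ht : 0 < t) (s : ℂ) :
    ∀ n : ℕ, ((t^n : ℝ):ℂ)^s = ((t:ℂ)^s)^n := by
  intro n
  induction n with
  | zero => simp
  | succ n ih =>
    have h1 : ((t^(n+1) : ℝ):ℂ) = (t:ℂ) * ((t^n : ℝ):ℂ) := by
      push_cast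
      ring
    have h2 : ((t^n : ℝ):ℂ) ≠ 0 := by
      have : (0:ℝ) < t^n := pow_pos ht n
      simpa using this.ne'
    rw [h1, ofReal_mul_cpow ht h2, ih, pow_succ]
    ring

end cpowhelp

lemma JHE_eq (σ : ℂ) (p : ℝ) (x : ℂ) :
    JHE σ p x = x^σ * (qPochInfC ((p:ℂ)^(σ+1)) (p:ℂ) / qPochInfC (p:ℂ) (p:ℂ)) *
      Gf p ((p:ℂ)^(σ+1)) (x^2) := by
  rw [JHE, Gf]
  congr 1
  refine tsum_congr fun k => ?_
  rw [dcoef, pow_mul]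
  ring

end Prop31

open Prop31 in
/-- Proposition 3.1: for `Re ν > -1`, `z > 0` and nonzero `a, b ∈ ℂ`,
`(a² − b²) ∫₀^z x J_ν(aqx;q²) J_ν(bqx;q²) d_q x
  = (1−q) q^{ν−1} z (a J_{ν+1}(aqz;q²) J_ν(bz;q²) − b J_{ν+1}(bqz;q²) J_ν(az;q²))`. -/
theorem prop_3_1 (q : ℝ) (hq0 : 0 < q) (hq1 : q < 1) (ν : ℂ) (hν : -1 < ν.re)
    (z : ℝ) (hz : 0 < z) (a b : ℂ) (ha : a ≠ 0) (hb : b ≠ 0) :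
    (a ^ 2 - b ^ 2) *
        qInt q z (fun x => (x : ℂ) * JHE ν (q ^ 2) (a * q * x) * JHE ν (q ^ 2) (b * q * x)) =
      ((1 - q : ℝ) : ℂ) * (q : ℂ) ^ (ν - 1) * (z : ℂ) *
        (a * JHE (ν + 1) (q ^ 2) (a * q * z) * JHE ν (q ^ 2) (b * z) -
          b * JHE (ν + 1) (q ^ 2) (b * q * z) * JHE ν (q ^ 2) (a * z)) := by
  have hq2 : (0:ℝ) < q^2 := by positivity
  have hq21 : q^2 < 1 := by nlinarith
  have hqC : (q:ℂ) ≠ 0 := by simpa using hq0.ne'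
  have hzC : (z:ℂ) ≠ 0 := by simpa using hz.ne'
  have h2C : ((q^2:ℝ):ℂ) ≠ 0 := by simpa using hq2.ne'
  have hre : 0 < (ν+1).re := by
    simp only [Complex.add_re, Complex.one_re]
    linarith
  set A : ℂ := ((q^2:ℝ):ℂ)^(ν+1) with hAdef
  have hA : ‖A‖ < 1 := by
    rw [hAdef, Complex.norm_cpow_eq_rpow_re_of_pos hq2]
    exact Real.rpow_lt_one hq2.le hq21 hre
  have h1A : (1:ℂ) - A ≠ 0 := one_sub_ne hA
  have hAval : A = ((q:ℂ)^ν * (q:ℂ))^2 := by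
    rw [hAdef, show ((q^2:ℝ):ℂ) = (q:ℂ)*(q:ℂ) by push_cast; ring,
      ofReal_mul_cpow hq0 hqC, Complex.cpow_add _ _ hqC, Complex.cpow_one]
    ring
  have hA2 : ((q^2:ℝ):ℂ)^(ν+1+1) = A * ((q^2:ℝ):ℂ) := by
    rw [Complex.cpow_add _ _ h2C, Complex.cpow_one, hAdef]
  set E : ℂ := a^ν * b^ν * ((z:ℂ)^ν)^2 * ((q:ℂ)^ν)^2 *
    (qPochInfC A ((q^2:ℝ):ℂ) / qPochInfC ((q^2:ℝ):ℂ) ((q^2:ℝ):ℂ))^2 * (z:ℂ) with hE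
  have hterm : ∀ k : ℕ,
      ((q^k : ℝ):ℂ) * (((z*q^k : ℝ):ℂ) * JHE ν (q^2) (a*(q:ℂ)*((z*q^k : ℝ):ℂ))
          * JHE ν (q^2) (b*(q:ℂ)*((z*q^k : ℝ):ℂ)))
        = E * (A^k * Gf (q^2) A (a^2*(((q^2:ℝ):ℂ)^(k+1)*((z:ℂ))^2))
            * Gf (q^2) A (b^2*(((q^2:ℝ):ℂ)^(k+1)*((z:ℂ))^2))) := by
    intro k
    have htk : (0:ℝ) < q^(k+1)*z := by positivity
    have hqk1 : (0:ℝ) < q^(k+1) := by positivity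
    have e1 : a*(q:ℂ)*((z*q^k : ℝ):ℂ) = ((q^(k+1)*z : ℝ):ℂ) * a := by push_cast; ring
    have e1b : b*(q:ℂ)*((z*q^k : ℝ):ℂ) = ((q^(k+1)*z : ℝ):ℂ) * b := by push_cast; ring
    have e2 : ((q^(k+1)*z : ℝ):ℂ)^ν = ((q:ℂ)^ν)^(k+1) * (z:ℂ)^ν := by
      rw [show ((q^(k+1)*z : ℝ):ℂ) = ((q^(k+1):ℝ):ℂ) * (z:ℂ) by push_cast; ring,
        ofReal_mul_cpow hqk1 hzC ν, ofReal_pow_cpow hq0 ν (k+1)]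
    have e3 : (((q^(k+1)*z : ℝ):ℂ) * a)^2 = a^2*(((q^2:ℝ):ℂ)^(k+1)*((z:ℂ))^2) := by
      push_cast; ring
    have e3b : (((q^(k+1)*z : ℝ):ℂ) * b)^2 = b^2*(((q^2:ℝ):ℂ)^(k+1)*((z:ℂ))^2) := by
      push_cast; ring
    rw [e1, e1b, JHE_eq, JHE_eq, ← hAdef,
      ofReal_mul_cpow htk ha ν, ofReal_mul_cpow htk hb ν, e2, e3, e3b, hE, hAval]
    push_cast
    ring
  have tele := telescope hq2 hq21 hA a b (((z:ℂ))^2)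
  have hC : qPochInfC A ((q^2:ℝ):ℂ)
      = (1-A) * qPochInfC (A*((q^2:ℝ):ℂ)) ((q^2:ℝ):ℂ) := qPochInfC_shift hq2 hq21 hA
  have hqnu : (q:ℂ)^(ν-1) * (q:ℂ) = (q:ℂ)^ν := by
    rw [show (q:ℂ)^ν = (q:ℂ)^(ν-1+1) by ring_nf, Complex.cpow_add _ _ hqC,
      Complex.cpow_one]
  simp only [qInt]
  rw [tsum_congr hterm, tsum_mul_left]
  have hqz : (0:ℝ) < q*z := by positivity
  rw [show a*(q:ℂ)*(z:ℂ) = ((q*z:ℝ):ℂ)*a by push_cast; ring,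
      show b*(q:ℂ)*(z:ℂ) = ((q*z:ℝ):ℂ)*b by push_cast; ring,
      show b*(z:ℂ) = ((z:ℝ):ℂ)*b by ring,
      show a*(z:ℂ) = ((z:ℝ):ℂ)*a by ring,
      JHE_eq, JHE_eq, JHE_eq, JHE_eq, hA2, ← hAdef]
  rw [ofReal_mul_cpow hqz ha (ν+1), ofReal_mul_cpow hqz hb (ν+1),
      ofReal_mul_cpow hz hb ν, ofReal_mul_cpow hz ha ν]
  rw [show ((q*z:ℝ):ℂ)^(ν+1) = ((q:ℂ)^ν*(q:ℂ))*((z:ℂ)^ν*(z:ℂ)) by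
        rw [show ((q*z:ℝ):ℂ) = ((q:ℝ):ℂ)*(z:ℂ) by push_cast; ring,
          ofReal_mul_cpow hq0 hzC (ν+1), Complex.cpow_add _ _ hqC,
          Complex.cpow_add _ _ hzC, Complex.cpow_one, Complex.cpow_one]]
  rw [show a^(ν+1) = a^ν*a by rw [Complex.cpow_add _ _ ha, Complex.cpow_one],
      show b^(ν+1) = b^ν*b by rw [Complex.cpow_add _ _ hb, Complex.cpow_one]]
  rw [show (((q*z:ℝ):ℂ)*a)^2 = a^2*(((q^2:ℝ):ℂ)*((z:ℂ))^2) by push_cast; ring,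
      show (((q*z:ℝ):ℂ)*b)^2 = b^2*(((q^2:ℝ):ℂ)*((z:ℂ))^2) by push_cast; ring,
      show (((z:ℝ):ℂ)*b)^2 = b^2*((z:ℂ))^2 by ring,
      show (((z:ℝ):ℂ)*a)^2 = a^2*((z:ℂ))^2 by ring]
  rw [show (((1-q)*z:ℝ):ℂ) = (1-(q:ℂ))*(z:ℂ) by push_cast; ring,
      show ((1-q:ℝ):ℂ) = 1-(q:ℂ) by push_cast; ring]
  rw [hE, hC, ← hqnu]
  linear_combination ((1-(q:ℂ))*(z:ℂ)*(z:ℂ)*a^ν*b^ν*((z:ℂ)^ν)^2*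
      ((q:ℂ)^(ν-1)*(q:ℂ))^2*(1-A)*
      (qPochInfC (A*((q^2:ℝ):ℂ)) ((q^2:ℝ):ℂ))^2 /
      (qPochInfC ((q^2:ℝ):ℂ) ((q^2:ℝ):ℂ))^2) * tele

end
end

section
/- Fix q with 0 < q < 1 and let ν ∈ ℝ. For every m ∈ ℕ and every x ≠ 0: x^m R_{m,ν}(x;q) = Σ_{n=0}^{m} x^{2n} Σ_{j=0}^{m−n} [ (q^{n−m};q)_j (q^{n+1};q)_j / ((q;q)_j)² ] q^{j(ν+m−n)}. In particular, x^m R_{m,ν}(x;q) is a polynomial of degree m in the variable x². -/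
open scoped BigOperators

noncomputable section

/-- The q-Lommel polynomials `R_{m,ν}(x;q)` associated with the Hahn–Exton q-Bessel
function, defined by `R_{0,ν} = 1`, `R_{1,ν}(x) = x + (1-q^ν)/x` and the three term
recurrence `R_{m+1,ν}(x) = (x + (1-q^{ν+m})/x) R_{m,ν}(x) - R_{m-1,ν}(x)`. -/
def Rlom (q : ℝ) : ℕ → ℝ → ℝ → ℝ
  | 0, _, _ => 1
  | 1, ν, x => x + (1 - q ^ ν) / x
  | m + 2, ν, x =>
      (x + (1 - q ^ (ν + (m : ℝ) + 1)) / x) * Rlom q (m + 1) ν x - Rlom q m ν x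

/-- Real finite q-shifted factorial `(a;q)_k`. -/
def qPochR (a q : ℝ) (k : ℕ) : ℝ := ∏ j ∈ Finset.range k, (1 - a * q ^ j)

/-! ### Auxiliary machinery -/

/-- The basic building block `(q^{-k};q)_j (q^N;q)_j / ((q;q)_j)^2 · q^{jk}`. -/
def Fq (q : ℝ) (j k N : ℕ) : ℝ :=
  qPochR (q ^ (-(k : ℤ))) q j * qPochR (q ^ N) q j / (qPochR q q j) ^ 2 * q ^ (j * k)

/-- The coefficient of `x^{2n}` in the explicit formula. -/
def ccoef (q ν : ℝ) (m n : ℕ) : ℝ :=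
  ∑ j ∈ Finset.range (m - n + 1),
    qPochR (q ^ ((n : ℤ) - (m : ℤ))) q j * qPochR (q ^ (n + 1)) q j /
      (qPochR q q j) ^ 2 * q ^ ((j : ℝ) * (ν + (m : ℝ) - (n : ℝ)))

/-- The full explicit sum. -/
def Sq (q ν : ℝ) (m : ℕ) (x : ℝ) : ℝ :=
  ∑ n ∈ Finset.range (m + 1), x ^ (2 * n) * ccoef q ν m n

lemma qPochR_zero (a q : ℝ) : qPochR a q 0 = 1 := by simp [qPochR]

lemma qPochR_succ (a q : ℝ) (j : ℕ) :
    qPochR a q (j + 1) = qPochR a q j * (1 - a * q ^ j) := by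
  simp [qPochR, Finset.prod_range_succ]

lemma qPochR_succ' (a q : ℝ) (j : ℕ) :
    qPochR a q (j + 1) = (1 - a) * qPochR (a * q) q j := by
  rw [qPochR, Finset.prod_range_succ']
  simp only [pow_zero, mul_one, qPochR]
  rw [mul_comm]
  congr 1
  apply Finset.prod_congr rfl
  intro i _
  ring

lemma qPochR_D_pos {q : ℝ} (hq0 : 0 < q) (hq1 : q < 1) (j : ℕ) : 0 < qPochR q q j := by
  apply Finset.prod_pos
  intro i _
  have : q * q ^ i < 1 := by
    calc q * q ^ i = q ^ (i + 1) := by ring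
    _ < 1 := pow_lt_one₀ hq0.le hq1 (Nat.succ_ne_zero i)
  linarith

lemma qPochR_D_ne {q : ℝ} (hq0 : 0 < q) (hq1 : q < 1) (j : ℕ) : qPochR q q j ≠ 0 :=
  (qPochR_D_pos hq0 hq1 j).ne'

lemma Fq_zero_j (q : ℝ) (k N : ℕ) : Fq q 0 k N = 1 := by
  simp [Fq, qPochR_zero]

lemma Fq_vanish {q : ℝ} (hq0 : 0 < q) {j k : ℕ} (N : ℕ) (h : k < j) : Fq q j k N = 0 := by
  have h1 : qPochR (q ^ (-(k : ℤ))) q j = 0 := by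
    apply Finset.prod_eq_zero (Finset.mem_range.mpr h)
    have : (q : ℝ) ^ (-(k : ℤ)) * q ^ k = 1 := by
      rw [zpow_neg, zpow_natCast]
      exact inv_mul_cancel₀ (pow_ne_zero _ hq0.ne')
    rw [this]; ring
  unfold Fq
  rw [h1]
  simp

lemma Fq_N_zero {q : ℝ} (j k : ℕ) : Fq q j k 0 = if j = 0 then 1 else 0 := by
  cases j with
  | zero => simp [Fq_zero_j]
  | succ J =>
    have h1 : qPochR (q ^ (0 : ℕ)) q (J + 1) = 0 := by
      rw [qPochR_succ']; simp
    unfold Fq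
    rw [h1]
    simp

/-- The key local identity among the building blocks. -/
lemma Fq_key {q : ℝ} (hq0 : 0 < q) (hq1 : q < 1) (J K n : ℕ) :
    Fq q (J+1) (K+1) (n+1) =
      Fq q (J+1) (K+1) n + Fq q (J+1) K (n+1)
        - q ^ (n+K) * Fq q J K (n+1) - Fq q (J+1) K n := by
  have hD := qPochR_D_ne hq0 hq1 J
  have hq := hq0.ne'
  have hE : (1 : ℝ) - q * q ^ J ≠ 0 := by
    have : q * q ^ J < 1 := by
      calc q * q ^ J = q ^ (J + 1) := by ring
      _ < 1 := pow_lt_one₀ hq0.le hq1 (Nat.succ_ne_zero J)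
    linarith
  have z1 : (q : ℝ) ^ (-((K + 1 : ℕ) : ℤ)) = (q ^ (K + 1))⁻¹ := by
    rw [zpow_neg, zpow_natCast]
  have z2 : (q : ℝ) ^ (-((K : ℕ) : ℤ)) = (q ^ K)⁻¹ := by
    rw [zpow_neg, zpow_natCast]
  have e1 : qPochR ((q ^ (K + 1))⁻¹) q (J + 1)
      = (1 - (q ^ (K + 1))⁻¹) * qPochR ((q ^ K)⁻¹) q J := by
    rw [qPochR_succ']
    congr 2
    rw [pow_succ]
    field_simp
  have e4 : qPochR (q ^ n) q (J + 1) = (1 - q ^ n) * qPochR (q ^ (n + 1)) q J := by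
    rw [qPochR_succ', ← pow_succ]
  simp only [Fq, z1, z2, e1, e4, qPochR_succ]
  have p1 : (J + 1) * (K + 1) = J * K + J + K + 1 := by ring
  have p2 : (J + 1) * K = J * K + K := by ring
  rw [p1, p2]
  simp only [pow_add, pow_succ, pow_zero]
  field_simp
  ring

/-- Summed form of the key identity. -/
lemma Fq_sum_key {q : ℝ} (hq0 : 0 < q) (hq1 : q < 1) (u : ℝ) (K n T : ℕ) (hT : K + 2 ≤ T) :
    ∑ j ∈ Finset.range T, Fq q j (K+1) (n+1) * u ^ j
      = ∑ j ∈ Finset.range T, Fq q j (K+1) n * u ^ j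
        + ∑ j ∈ Finset.range T, Fq q j K (n+1) * u ^ j
        - q ^ (n+K) * u * ∑ j ∈ Finset.range T, Fq q j K (n+1) * u ^ j
        - ∑ j ∈ Finset.range T, Fq q j K n * u ^ j := by
  obtain ⟨T', rfl⟩ : ∃ T', T = T' + 1 := ⟨T - 1, by omega⟩
  have h1 : ∀ j ∈ Finset.range (T' + 1),
      Fq q j (K+1) (n+1) * u ^ j
        = Fq q j (K+1) n * u ^ j + Fq q j K (n+1) * u ^ j
          - (if j = 0 then 0 else q ^ (n+K) * Fq q (j-1) K (n+1) * u ^ j)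
          - Fq q j K n * u ^ j := by
    intro j _
    cases j with
    | zero => simp [Fq_zero_j]
    | succ i =>
      rw [if_neg (Nat.succ_ne_zero i), Nat.add_sub_cancel, Fq_key hq0 hq1 i K n]
      ring
  have h2 : ∑ j ∈ Finset.range (T' + 1),
        (if j = 0 then (0:ℝ) else q ^ (n+K) * Fq q (j-1) K (n+1) * u ^ j)
      = q ^ (n+K) * u * ∑ j ∈ Finset.range (T' + 1), Fq q j K (n+1) * u ^ j := by
    rw [Finset.sum_range_succ']
    rw [Finset.sum_range_succ (fun j => Fq q j K (n+1) * u ^ j) T']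
    rw [Fq_vanish hq0 (n+1) (show K < T' by omega)]
    simp only [if_pos rfl, if_true, eq_self_iff_true, if_neg (Nat.succ_ne_zero _),
      Nat.add_sub_cancel, add_zero, zero_mul, mul_zero]
    rw [Finset.mul_sum]
    apply Finset.sum_congr rfl
    intro i _
    rw [pow_succ]
    ring
  rw [Finset.sum_congr rfl h1, Finset.sum_sub_distrib, Finset.sum_sub_distrib,
    Finset.sum_add_distrib, h2]

/-- The coefficients, rewritten via `Fq` over an arbitrary large range. -/
lemma ccoef_eq {q : ℝ} (hq0 : 0 < q) (ν : ℝ) {m n T : ℕ} (hnm : n ≤ m) (hT : m - n + 1 ≤ T) :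
    ccoef q ν m n = ∑ j ∈ Finset.range T, Fq q j (m - n) (n + 1) * (q ^ ν) ^ j := by
  have key : ∀ j : ℕ,
      qPochR (q ^ ((n : ℤ) - (m : ℤ))) q j * qPochR (q ^ (n + 1)) q j /
        (qPochR q q j) ^ 2 * q ^ ((j : ℝ) * (ν + (m : ℝ) - (n : ℝ)))
      = Fq q j (m - n) (n + 1) * (q ^ ν) ^ j := by
    intro j
    have hz : ((n : ℤ) - (m : ℤ)) = -((m - n : ℕ) : ℤ) := by omega
    have hr : (ν + (m : ℝ) - (n : ℝ)) = ν + ((m - n : ℕ) : ℝ) := by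
      rw [Nat.cast_sub hnm]; ring
    have hrp : q ^ ((j : ℝ) * (ν + ((m - n : ℕ) : ℝ))) = (q ^ ν) ^ j * q ^ (j * (m - n)) := by
      rw [mul_comm ((j : ℝ)) _, Real.rpow_mul hq0.le, Real.rpow_natCast,
        Real.rpow_add hq0, Real.rpow_natCast, mul_pow, ← pow_mul, mul_comm (m - n) j]
    rw [hz, hr, hrp, Fq]
    ring
  rw [ccoef, Finset.sum_congr rfl (fun j _ => key j)]
  apply Finset.sum_subset (Finset.range_subset_range.mpr hT)
  intro j _ hj
  rw [Fq_vanish hq0 (n+1) (by simp at hj; omega)]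
  ring

lemma Fq_sum_N_zero {q u : ℝ} (k T : ℕ) (hT : 1 ≤ T) :
    ∑ j ∈ Finset.range T, Fq q j k 0 * u ^ j = 1 := by
  have h : ∀ j ∈ Finset.range T, Fq q j k 0 * u ^ j = if j = 0 then 1 else 0 := by
    intro j _
    rw [Fq_N_zero]
    split
    · simp [*]
    · simp
  rw [Finset.sum_congr rfl h, Finset.sum_ite_eq' (Finset.range T) 0 (fun _ => (1:ℝ))]
  simp [Nat.lt_of_lt_of_le Nat.zero_lt_one hT]

lemma ccoef_diag (q ν : ℝ) (m : ℕ) : ccoef q ν m m = 1 := by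
  simp [ccoef, qPochR]

lemma ccoef_L0 {q : ℝ} (hq0 : 0 < q) (hq1 : q < 1) (ν : ℝ) (m : ℕ) :
    ccoef q ν (m+2) 0 = (1 - q ^ ν * q ^ (m+1)) * ccoef q ν (m+1) 0 := by
  rw [ccoef_eq hq0 ν (Nat.zero_le (m+2)) (show (m+2) - 0 + 1 ≤ m + 3 by omega),
    ccoef_eq hq0 ν (Nat.zero_le (m+1)) (show (m+1) - 0 + 1 ≤ m + 3 by omega)]
  rw [show (m+2) - 0 = (m+1) + 1 from rfl, show (m+1) - 0 = m + 1 from rfl]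
  have h := Fq_sum_key hq0 hq1 (q ^ ν) (m+1) 0 (m+3) (by omega)
  rw [Fq_sum_N_zero (m+2) (m+3) (by omega), Fq_sum_N_zero (m+1) (m+3) (by omega)] at h
  rw [h]
  ring

lemma ccoef_L1 {q : ℝ} (hq0 : 0 < q) (hq1 : q < 1) (ν : ℝ) {m n : ℕ} (hnm : n ≤ m) :
    ccoef q ν (m+2) (n+1)
      = ccoef q ν (m+1) n + (1 - q ^ ν * q ^ (m+1)) * ccoef q ν (m+1) (n+1)
        - ccoef q ν m n := by
  rw [ccoef_eq hq0 ν (show n+1 ≤ m+2 by omega) (show (m+2) - (n+1) + 1 ≤ m + 3 by omega),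
    ccoef_eq hq0 ν (show n ≤ m+1 by omega) (show (m+1) - n + 1 ≤ m + 3 by omega),
    ccoef_eq hq0 ν (show n+1 ≤ m+1 by omega) (show (m+1) - (n+1) + 1 ≤ m + 3 by omega),
    ccoef_eq hq0 ν hnm (show m - n + 1 ≤ m + 3 by omega)]
  rw [show (m+2) - (n+1) = (m-n) + 1 by omega, show (m+1) - n = (m-n) + 1 by omega,
    show (m+1) - (n+1) = m - n by omega]
  have h := Fq_sum_key hq0 hq1 (q ^ ν) (m-n) (n+1) (m+3) (by omega)
  rw [show (n+1) + (m-n) = m+1 by omega] at h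
  rw [h]
  ring

/-- Three term recurrence for the explicit sums. -/
lemma Sq_rec {q : ℝ} (hq0 : 0 < q) (hq1 : q < 1) (ν : ℝ) (m : ℕ) (x : ℝ) :
    Sq q ν (m+2) x
      = (x ^ 2 + (1 - q ^ ν * q ^ (m+1))) * Sq q ν (m+1) x - x ^ 2 * Sq q ν m x := by
  set β := 1 - q ^ ν * q ^ (m+1) with hβ
  have hL : Sq q ν (m+2) x
      = (∑ n ∈ Finset.range (m+1), x ^ (2*(n+1)) * ccoef q ν (m+2) (n+1))
        + x ^ (2*(m+2)) + ccoef q ν (m+2) 0 := by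
    rw [Sq, Finset.sum_range_succ' (fun n => x ^ (2*n) * ccoef q ν (m+2) n) (m+2),
      Finset.sum_range_succ, ccoef_diag]
    ring
  have hM : Sq q ν (m+1) x
      = (∑ n ∈ Finset.range (m+1), x ^ (2*n) * ccoef q ν (m+1) n) + x ^ (2*(m+1)) := by
    rw [Sq, Finset.sum_range_succ, ccoef_diag]
    ring
  have hM' : Sq q ν (m+1) x
      = (∑ n ∈ Finset.range (m+1), x ^ (2*(n+1)) * ccoef q ν (m+1) (n+1))
        + ccoef q ν (m+1) 0 := by
    rw [Sq, Finset.sum_range_succ' (fun n => x ^ (2*n) * ccoef q ν (m+1) n) (m+1)]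
    ring
  have expand : (x ^ 2 + β) * Sq q ν (m+1) x - x ^ 2 * Sq q ν m x
      = x ^ 2 * ((∑ n ∈ Finset.range (m+1), x ^ (2*n) * ccoef q ν (m+1) n) + x ^ (2*(m+1)))
        + β * ((∑ n ∈ Finset.range (m+1), x ^ (2*(n+1)) * ccoef q ν (m+1) (n+1))
            + ccoef q ν (m+1) 0)
        - x ^ 2 * ∑ n ∈ Finset.range (m+1), x ^ (2*n) * ccoef q ν m n := by
    rw [← hM, ← hM',
      ← (show Sq q ν m x = ∑ n ∈ Finset.range (m+1), x ^ (2*n) * ccoef q ν m n from rfl)]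
    ring
  rw [hL, expand, ccoef_L0 hq0 hq1 ν m]
  have hsum : ∑ n ∈ Finset.range (m+1), x ^ (2*(n+1)) * ccoef q ν (m+2) (n+1)
      = ∑ n ∈ Finset.range (m+1),
          (x ^ 2 * (x ^ (2*n) * ccoef q ν (m+1) n)
            + β * (x ^ (2*(n+1)) * ccoef q ν (m+1) (n+1))
            - x ^ 2 * (x ^ (2*n) * ccoef q ν m n)) := by
    apply Finset.sum_congr rfl
    intro n hn
    rw [ccoef_L1 hq0 hq1 ν (Nat.lt_succ_iff.mp (Finset.mem_range.mp hn))]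
    ring
  rw [hsum, Finset.sum_sub_distrib, Finset.sum_add_distrib, ← Finset.mul_sum,
    ← Finset.mul_sum, ← Finset.mul_sum]
  ring

lemma ccoef_one_zero {q : ℝ} (hq0 : 0 < q) (hq1 : q < 1) (ν : ℝ) :
    ccoef q ν 1 0 = 1 - q ^ ν := by
  have h1q : (1 : ℝ) - q ≠ 0 := by linarith
  rw [ccoef]
  norm_num [Finset.sum_range_succ, Finset.sum_range_one, qPochR, Finset.prod_range_one]
  rw [show q ^ (ν + (1:ℝ)) = q ^ ν * q by rw [Real.rpow_add hq0, Real.rpow_one]]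
  field_simp
  ring

/-- First part: the explicit formula. -/
lemma part1 {q : ℝ} (hq0 : 0 < q) (hq1 : q < 1) (ν : ℝ) :
    ∀ m : ℕ, ∀ x : ℝ, x ≠ 0 → x ^ m * Rlom q m ν x = Sq q ν m x := by
  intro m
  induction m using Nat.twoStepInduction with
  | zero =>
    intro x hx
    simp [Rlom, Sq, ccoef_diag]
  | one =>
    intro x hx
    have : Sq q ν 1 x = ccoef q ν 1 0 + x ^ 2 * ccoef q ν 1 1 := by
      rw [Sq, Finset.sum_range_succ, Finset.sum_range_one]
      ring
    rw [this, ccoef_diag, ccoef_one_zero hq0 hq1 ν]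
    show x ^ 1 * (x + (1 - q ^ ν) / x) = _
    field_simp
    ring
  | more m ih1 ih2 =>
    intro x hx
    have hR : Rlom q (m+2) ν x
        = (x + (1 - q ^ (ν + (m:ℝ) + 1)) / x) * Rlom q (m+1) ν x - Rlom q m ν x := rfl
    have hb : q ^ (ν + (m:ℝ) + 1) = q ^ ν * q ^ ((m+1 : ℕ)) := by
      rw [show ν + (m:ℝ) + 1 = ν + ((m+1 : ℕ) : ℝ) by push_cast; ring,
        Real.rpow_add hq0, Real.rpow_natCast]
    calc x ^ (m+2) * Rlom q (m+2) ν x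
        = (x ^ 2 + (1 - q ^ ν * q ^ (m+1))) * (x ^ (m+1) * Rlom q (m+1) ν x)
          - x ^ 2 * (x ^ m * Rlom q m ν x) := by
          rw [hR, hb]; field_simp; ring
      _ = Sq q ν (m+2) x := by
          rw [ih1 x hx, ih2 x hx, Sq_rec hq0 hq1 ν m x]

/-- Second part: the polynomial. -/
lemma part2poly (q ν : ℝ) (m : ℕ) :
    ∃ p : Polynomial ℝ, p.natDegree = m ∧
      ∀ x : ℝ, p.eval (x ^ 2) = ∑ n ∈ Finset.range (m + 1), x ^ (2 * n) * ccoef q ν m n := by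
  refine ⟨∑ n ∈ Finset.range (m + 1), Polynomial.C (ccoef q ν m n) * Polynomial.X ^ n, ?_, ?_⟩
  · apply Polynomial.natDegree_eq_of_le_of_coeff_ne_zero
    · apply Polynomial.natDegree_sum_le_of_forall_le
      intro i hi
      calc (Polynomial.C (ccoef q ν m i) * Polynomial.X ^ i).natDegree
          ≤ (Polynomial.X ^ i : Polynomial ℝ).natDegree := Polynomial.natDegree_C_mul_le _ _
        _ = i := Polynomial.natDegree_X_pow i
        _ ≤ m := Nat.lt_succ_iff.mp (Finset.mem_range.mp hi)
    · rw [Polynomial.finset_sum_coeff]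
      have h : ∀ n ∈ Finset.range (m + 1),
          (Polynomial.C (ccoef q ν m n) * Polynomial.X ^ n).coeff m
            = if m = n then ccoef q ν m n else 0 := by
        intro n _
        rw [Polynomial.coeff_C_mul, Polynomial.coeff_X_pow]
        split <;> simp
      rw [Finset.sum_congr rfl h, Finset.sum_ite_eq (Finset.range (m+1)) m (ccoef q ν m)]
      simp [ccoef_diag]
  · intro x
    rw [Polynomial.eval_finset_sum]
    apply Finset.sum_congr rfl
    intro n _
    rw [Polynomial.eval_mul, Polynomial.eval_C, Polynomial.eval_pow, Polynomial.eval_X,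
      ← pow_mul]
    ring

/-- Explicit formula for the q-Lommel polynomials:
`x^m R_{m,ν}(x;q) = Σ_{n=0}^m x^{2n} Σ_{j=0}^{m-n} ((q^{n-m};q)_j (q^{n+1};q)_j/((q;q)_j)²) q^{j(ν+m-n)}`;
in particular `x^m R_{m,ν}(x;q)` is a polynomial of degree `m` in `x²`. -/
theorem explicit_R (q : ℝ) (hq0 : 0 < q) (hq1 : q < 1) (ν : ℝ) :
    (∀ m : ℕ, ∀ x : ℝ, x ≠ 0 →
      x ^ m * Rlom q m ν x =
        ∑ n ∈ Finset.range (m + 1), x ^ (2 * n) *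
          ∑ j ∈ Finset.range (m - n + 1),
            qPochR (q ^ ((n : ℤ) - (m : ℤ))) q j * qPochR (q ^ (n + 1)) q j /
              (qPochR q q j) ^ 2 * q ^ ((j : ℝ) * (ν + (m : ℝ) - (n : ℝ)))) ∧
    (∀ m : ℕ, ∃ p : Polynomial ℝ, p.natDegree = m ∧
      ∀ x : ℝ, x ≠ 0 → x ^ m * Rlom q m ν x = p.eval (x ^ 2)) := by
  constructor
  · intro m x hx
    exact part1 hq0 hq1 ν m x hx
  · intro m
    obtain ⟨p, hdeg, hev⟩ := part2poly q ν m
    exact ⟨p, hdeg, fun x hx => by rw [part1 hq0 hq1 ν m x hx]; exact (hev x).symm⟩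

end
end
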